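/- arXiv:0807.4952 — 5 statements merged into one kernel-verified Lean document; each statement's English description precedes it below -/
import Mathlib

section
/- Let α ∈ ℂ with 0 < |α| < 1 and let X = ℂ × (ℂ² \ {0}). Define g : X → X by g(t, (z₁, z₂)) = (t, (α·z₁ + t·z₂, α·z₂)). Then g is a well-defined bijection of X, and the induced ℤ-action n • x = gⁿ(x) is free (if gⁿ(x) = x for some x ∈ X then n = 0) and properly discontinuous (for every compact subset K of X, the set {n ∈ ℤ : gⁿ(K) ∩ K ≠ ∅} is finite). -/
noncomputable def hopfG (α : ℂ) (hα : α ≠ 0) :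
    Equiv.Perm {p : ℂ × ℂ × ℂ // p.2 ≠ 0} where
  toFun x := ⟨(x.val.1, (α * x.val.2.1 + x.val.1 * x.val.2.2, α * x.val.2.2)), by
    intro h
    rw [Prod.ext_iff] at h
    simp only [Prod.fst_zero, Prod.snd_zero] at h
    obtain ⟨h1, h2⟩ := h
    have hz2 : x.val.2.2 = 0 := by
      rcases mul_eq_zero.mp h2 with h | h
      · exact absurd h hα
      · exact h
    have hz1 : x.val.2.1 = 0 := by
      rw [hz2, mul_zero, add_zero] at h1
      rcases mul_eq_zero.mp h1 with h | h
      · exact absurd h hα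
      · exact h
    exact x.prop (Prod.ext hz1 hz2)⟩
  invFun x := ⟨(x.val.1, ((x.val.2.1 - x.val.1 * (x.val.2.2 / α)) / α, x.val.2.2 / α)), by
    intro h
    rw [Prod.ext_iff] at h
    simp only [Prod.fst_zero, Prod.snd_zero] at h
    obtain ⟨h1, h2⟩ := h
    have hz2 : x.val.2.2 = 0 := by
      rcases div_eq_zero_iff.mp h2 with h | h
      · exact h
      · exact absurd h hα
    have hz1 : x.val.2.1 = 0 := by
      rw [hz2] at h1
      simp only [mul_zero, zero_div, sub_zero] at h1
      rcases div_eq_zero_iff.mp h1 with h | h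
      · exact h
      · exact absurd h hα
    exact x.prop (Prod.ext hz1 hz2)⟩
  left_inv x := by
    apply Subtype.ext
    simp only
    refine Prod.ext rfl (Prod.ext ?_ ?_)
    · field_simp
      ring
    · field_simp
  right_inv x := by
    apply Subtype.ext
    simp only
    refine Prod.ext rfl (Prod.ext ?_ ?_)
    · field_simp
      ring
    · field_simp

lemma hopfG_apply (α : ℂ) (hα : α ≠ 0) (x : {p : ℂ × ℂ × ℂ // p.2 ≠ 0}) :
    ((hopfG α hα) x).val =
      (x.val.1, (α * x.val.2.1 + x.val.1 * x.val.2.2, α * x.val.2.2)) := rfl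

lemma hopfG_pow (α : ℂ) (hα : α ≠ 0) (n : ℕ) (x : {p : ℂ × ℂ × ℂ // p.2 ≠ 0}) :
    ((hopfG α hα ^ n) x).val =
      (x.val.1, (α ^ n * x.val.2.1 + n * α ^ n * (x.val.1 / α) * x.val.2.2,
        α ^ n * x.val.2.2)) := by
  induction n with
  | zero => simp
  | succ n ih =>
    rw [pow_succ', Equiv.Perm.mul_apply, hopfG_apply, ih]
    push_cast
    refine Prod.ext rfl (Prod.ext ?_ ?_)
    · simp only
      field_simp
      ring
    · simp only
      ring

lemma hopfG_pow_eq_one (α : ℂ) (h0 : 0 < ‖α‖) (h1 : ‖α‖ < 1) {m : ℕ}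
    (h : α ^ m = 1) : m = 0 := by
  by_contra hm
  have hlt : ‖α‖ ^ m < 1 := pow_lt_one₀ (norm_nonneg α) h1 hm
  rw [← norm_pow, h, norm_one] at hlt
  exact lt_irrefl 1 hlt

/-- The group action of the paper's Hopf surface example: for `α ∈ ℂ` with
`0 < |α| < 1` and `X = ℂ × (ℂ² \ {0})`, the map
`g(t, (z₁, z₂)) = (t, (α·z₁ + t·z₂, α·z₂))` is a well-defined bijection of `X`,
whose induced `ℤ`-action `n • x = gⁿ(x)` is free and properly discontinuous. -/
theorem hopf_surface_group_action (α : ℂ) (h0 : 0 < ‖α‖) (h1 : ‖α‖ < 1) :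
    ∃ g : Equiv.Perm {p : ℂ × ℂ × ℂ // p.2 ≠ 0},
      (∀ x : {p : ℂ × ℂ × ℂ // p.2 ≠ 0},
        (g x).val = (x.val.1, (α * x.val.2.1 + x.val.1 * x.val.2.2, α * x.val.2.2))) ∧
      (∀ (n : ℤ) (x : {p : ℂ × ℂ × ℂ // p.2 ≠ 0}), (g ^ n) x = x → n = 0) ∧
      (∀ K : Set {p : ℂ × ℂ × ℂ // p.2 ≠ 0}, IsCompact K →
        {n : ℤ | ((⇑(g ^ n)) '' K ∩ K).Nonempty}.Finite) := by
  have hα : α ≠ 0 := norm_pos_iff.mp h0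
  refine ⟨hopfG α hα, fun x => rfl, ?_, ?_⟩
  · -- freeness
    have key : ∀ (m : ℕ) (x : {p : ℂ × ℂ × ℂ // p.2 ≠ 0}),
        (hopfG α hα ^ m) x = x → m = 0 := by
      intro m x hx
      have hval := congrArg Subtype.val hx
      rw [hopfG_pow] at hval
      have h2 : α ^ m * x.val.2.2 = x.val.2.2 := by
        have := congrArg (fun p : ℂ × ℂ × ℂ => p.2.2) hval
        simpa using this
      have hA : α ^ m * x.val.2.1 + ↑m * α ^ m * (x.val.1 / α) * x.val.2.2
          = x.val.2.1 := by
        have := congrArg (fun p : ℂ × ℂ × ℂ => p.2.1) hval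
        simpa using this
      by_cases hz2 : x.val.2.2 = 0
      · have hz1 : x.val.2.1 ≠ 0 := by
          intro hz1
          exact x.prop (Prod.ext hz1 hz2)
        rw [hz2, mul_zero, add_zero] at hA
        have : α ^ m = 1 := by
          have := mul_right_cancel₀ hz1 (hA.trans (one_mul x.val.2.1).symm)
          exact this
        exact hopfG_pow_eq_one α h0 h1 this
      · have : α ^ m = 1 := by
          have := mul_right_cancel₀ hz2 (h2.trans (one_mul x.val.2.2).symm)
          exact this
        exact hopfG_pow_eq_one α h0 h1 this
    intro n x hgx
    rcases Int.natAbs_eq n with h | h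
    · rw [h, zpow_natCast] at hgx
      have := key n.natAbs x hgx
      omega
    · rw [h, zpow_neg, zpow_natCast] at hgx
      have hgx' : (hopfG α hα ^ n.natAbs) x = x := by
        conv_lhs => rw [← hgx]
        exact Equiv.apply_symm_apply _ _
      have := key n.natAbs x hgx'
      omega
  · -- proper discontinuity
    intro K hK
    rcases K.eq_empty_or_nonempty with rfl | hne
    · convert Set.finite_empty
      ext n
      simp
    -- min of ‖z‖ on K
    have hcont2 : Continuous fun x : {p : ℂ × ℂ × ℂ // p.2 ≠ 0} => ‖x.val.2‖ :=
      (continuous_subtype_val.snd).norm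
    have hcont1 : Continuous fun x : {p : ℂ × ℂ × ℂ // p.2 ≠ 0} => ‖x.val.1‖ :=
      (continuous_subtype_val.fst).norm
    obtain ⟨x0, hx0K, hx0min⟩ := hK.exists_isMinOn hne hcont2.continuousOn
    obtain ⟨x1, _, hx1max⟩ := hK.exists_isMaxOn hne hcont2.continuousOn
    obtain ⟨x2, _, hx2max⟩ := hK.exists_isMaxOn hne hcont1.continuousOn
    set c : ℝ := ‖x0.val.2‖ with hc_def
    set C : ℝ := ‖x1.val.2‖ with hC_def
    set T : ℝ := ‖x2.val.1‖ with hT_def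
    have hc : 0 < c := norm_pos_iff.mpr x0.prop
    have hCpos : 0 ≤ C := norm_nonneg _
    have hTpos : 0 ≤ T := norm_nonneg _
    rw [isMinOn_iff] at hx0min
    rw [isMaxOn_iff] at hx1max hx2max
    set b : ℕ → ℝ := fun n => ‖α‖ ^ n * C + ↑n * ‖α‖ ^ n * (T / ‖α‖) * C with hb_def
    have htend : Filter.Tendsto b Filter.atTop (nhds 0) := by
      have t1 := (tendsto_pow_atTop_nhds_zero_of_lt_one (norm_nonneg α) h1).mul_const C
      have t2 := (tendsto_self_mul_const_pow_of_lt_one (norm_nonneg α) h1).mul_const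
        ((T / ‖α‖) * C)
      have := t1.add t2
      simp only [zero_mul, add_zero] at this
      refine this.congr fun n => ?_
      simp only [hb_def]
      ring
    obtain ⟨N, hN⟩ := Filter.eventually_atTop.mp (htend.eventually (gt_mem_nhds hc))
    have key : ∀ m : ℕ, N ≤ m →
        ¬ ((⇑(hopfG α hα ^ (m : ℤ))) '' K ∩ K).Nonempty := by
      rintro m hm ⟨x, ⟨y, hyK, rfl⟩, hxK⟩
      rw [zpow_natCast] at hxK
      have hle : c ≤ ‖((hopfG α hα ^ m) y).val.2‖ := hx0min _ hxK
      have hz1C : ‖y.val.2.1‖ ≤ C := le_trans (norm_fst_le _) (hx1max _ hyK)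
      have hz2C : ‖y.val.2.2‖ ≤ C := le_trans (norm_snd_le _) (hx1max _ hyK)
      have htT : ‖y.val.1‖ ≤ T := hx2max _ hyK
      have hnorm : ‖((hopfG α hα ^ m) y).val.2‖ ≤ b m := by
        rw [hopfG_pow]
        rw [Prod.norm_def]
        refine max_le ?_ ?_
        · calc ‖α ^ m * y.val.2.1 + ↑m * α ^ m * (y.val.1 / α) * y.val.2.2‖
              ≤ ‖α ^ m * y.val.2.1‖ + ‖(↑m : ℂ) * α ^ m * (y.val.1 / α) * y.val.2.2‖ :=
                norm_add_le _ _
          _ ≤ b m := by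
              simp only [norm_mul, norm_pow, norm_div, Complex.norm_natCast, hb_def]
              gcongr
        · calc ‖α ^ m * y.val.2.2‖ = ‖α‖ ^ m * ‖y.val.2.2‖ := by
                rw [norm_mul, norm_pow]
          _ ≤ ‖α‖ ^ m * C := by gcongr
          _ ≤ b m := by
              have hnn : 0 ≤ ↑m * ‖α‖ ^ m * (T / ‖α‖) * C := by positivity
              simp only [hb_def]
              linarith
      have := hN m hm
      linarith
    have hsym : ∀ n : ℤ, ((⇑(hopfG α hα ^ n)) '' K ∩ K).Nonempty →
        ((⇑(hopfG α hα ^ (-n))) '' K ∩ K).Nonempty := by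
      rintro n ⟨x, ⟨y, hyK, rfl⟩, hxK⟩
      refine ⟨y, ⟨(hopfG α hα ^ n) y, hxK, ?_⟩, hyK⟩
      rw [zpow_neg]
      exact Equiv.symm_apply_apply _ _
    refine Set.Finite.subset (Set.finite_Icc (-(N : ℤ)) N) ?_
    intro n hn
    simp only [Set.mem_setOf_eq] at hn
    simp only [Set.mem_Icc]
    constructor
    · by_contra h
      push_neg at h
      have hn' := hsym n hn
      have hnat : ((-n).toNat : ℤ) = -n := Int.toNat_of_nonneg (by omega)
      apply key (-n).toNat (by omega)
      rw [hnat]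
      exact hn'
    · by_contra h
      push_neg at h
      have hnat : ((n).toNat : ℤ) = n := Int.toNat_of_nonneg (by omega)
      apply key n.toNat (by omega)
      rw [hnat]
      exact hn
end

section
/- Let H and V be real Banach spaces, A : H → H an invertible continuous linear map, B : V → H and D : V → V continuous linear maps, and λ ∈ (0, 1) with ‖D‖·‖A⁻¹‖ < λ. Then there exists ε > 0 such that for all continuous linear maps l, l′ : H → V with ‖l‖ ≤ ε and ‖l′‖ ≤ ε: the continuous linear map A + B∘l : H → H is invertible; the map φ(l) := D ∘ l ∘ (A + B∘l)⁻¹ satisfies ‖φ(l)‖ ≤ λ·ε ≤ ε; and ‖φ(l) − φ(l′)‖ ≤ λ·‖l − l′‖. In particular φ maps the closed ε-ball of the space of continuous linear maps from H to V into itself and is λ-Lipschitz there. -/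
open ContinuousLinearMap

/-- Auxiliary: if `‖A⁻¹‖ * ‖u‖ < 1` then `A + u` is invertible. -/
lemma exists_equiv_add_perturb
    {H : Type*} [NormedAddCommGroup H] [NormedSpace ℝ H] [CompleteSpace H]
    (A : H ≃L[ℝ] H) (u : H →L[ℝ] H)
    (h : ‖(A.symm : H →L[ℝ] H)‖ * ‖u‖ < 1) :
    ∃ e : H ≃L[ℝ] H, (e : H →L[ℝ] H) = (A : H →L[ℝ] H) + u := by
  have ht : ‖-((A.symm : H →L[ℝ] H) ∘L u)‖ < 1 := by
    rw [norm_neg]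
    exact lt_of_le_of_lt (opNorm_comp_le _ _) h
  let w : (H →L[ℝ] H)ˣ := Units.oneSub _ ht
  refine ⟨(ContinuousLinearEquiv.unitsEquiv ℝ H w).trans A, ?_⟩
  ext x
  have hw : (w : H →L[ℝ] H) x = x + (A.symm : H →L[ℝ] H) (u x) := by
    have : (w : H →L[ℝ] H) = (1 : H →L[ℝ] H) - -((A.symm : H →L[ℝ] H) ∘L u) :=
      Units.val_oneSub _ _
    rw [this]
    simp
  simp only [ContinuousLinearEquiv.coe_coe, ContinuousLinearEquiv.trans_apply,
    ContinuousLinearEquiv.unitsEquiv_apply, ContinuousLinearMap.add_apply, hw, map_add]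
  simp

/-- Pure arithmetic: choice of `ε`. -/
lemma graph_transform_eps (M c K lam : ℝ) (hM : 0 ≤ M) (hc : 0 ≤ c) (hK : 0 ≤ K)
    (hcontr : K * M < lam) :
    ∃ ε > (0 : ℝ), M * c * ε ≤ 1 / 2 ∧ 6 * (K * M ^ 2 * c) * ε ≤ lam - K * M := by
  have hKMc : (0 : ℝ) ≤ K * M ^ 2 * c := mul_nonneg (mul_nonneg hK (sq_nonneg M)) hc
  have hγ : 0 < lam - K * M := by linarith
  have hMc : (0 : ℝ) ≤ M * c := mul_nonneg hM hc
  have hden1 : (0 : ℝ) < 2 * (M * c + 1) := by linarith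
  have hden2 : (0 : ℝ) < 6 * (K * M ^ 2 * c) + 1 := by linarith
  refine ⟨min ((2 * (M * c + 1))⁻¹) ((lam - K * M) / (6 * (K * M ^ 2 * c) + 1)),
    lt_min (by positivity) (by positivity), ?_, ?_⟩
  · have h1 : min ((2 * (M * c + 1))⁻¹) ((lam - K * M) / (6 * (K * M ^ 2 * c) + 1))
        ≤ (2 * (M * c + 1))⁻¹ := min_le_left _ _
    have h2 : M * c * min ((2 * (M * c + 1))⁻¹) ((lam - K * M) / (6 * (K * M ^ 2 * c) + 1))
        ≤ M * c * (2 * (M * c + 1))⁻¹ := mul_le_mul_of_nonneg_left h1 hMc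
    have h3 : M * c * (2 * (M * c + 1))⁻¹ ≤ 1 / 2 := by
      rw [mul_inv_le_iff₀ hden1]
      nlinarith
    linarith
  · have h1 : min ((2 * (M * c + 1))⁻¹) ((lam - K * M) / (6 * (K * M ^ 2 * c) + 1))
        ≤ (lam - K * M) / (6 * (K * M ^ 2 * c) + 1) := min_le_right _ _
    have hε0 : 0 < min ((2 * (M * c + 1))⁻¹) ((lam - K * M) / (6 * (K * M ^ 2 * c) + 1)) :=
      lt_min (by positivity) (by positivity)
    have h2 : min ((2 * (M * c + 1))⁻¹) ((lam - K * M) / (6 * (K * M ^ 2 * c) + 1))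
        * (6 * (K * M ^ 2 * c) + 1) ≤ lam - K * M := by
      rw [← le_div_iff₀ hden2]; exact h1
    nlinarith [hε0.le]

/-- Pure arithmetic: bound on the inverse. -/
lemma graph_transform_inv_bound (M c ε x : ℝ) (hM : 0 ≤ M) (hc : 0 ≤ c) (hε : 0 ≤ ε)
    (hx0 : 0 ≤ x) (hsmall : M * c * ε ≤ 1 / 2) (hstep : x ≤ M + x * (c * ε) * M) :
    x ≤ 2 * M ∧ x ≤ M + 2 * M ^ 2 * c * ε := by
  have h1 : x * (c * ε) * M ≤ x * (1 / 2) := by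
    have := mul_le_mul_of_nonneg_left hsmall hx0
    nlinarith
  have h2M : x ≤ 2 * M := by linarith
  refine ⟨h2M, ?_⟩
  have h2 : x * (c * ε) * M ≤ 2 * M * (c * ε) * M :=
    mul_le_mul_of_nonneg_right (mul_le_mul_of_nonneg_right h2M (by positivity)) hM
  nlinarith

/-- Pure arithmetic: the contraction coefficient. -/
lemma graph_transform_coeff (M c K lam ε x x' : ℝ) (hM : 0 ≤ M) (hc : 0 ≤ c)
    (hK : 0 ≤ K) (hε : 0 ≤ ε) (hx0 : 0 ≤ x) (hx'0 : 0 ≤ x')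
    (hx1 : x ≤ M + 2 * M ^ 2 * c * ε) (hx2 : x ≤ 2 * M) (hx3 : x' ≤ 2 * M)
    (h6 : 6 * (K * M ^ 2 * c) * ε ≤ lam - K * M) :
    K * x + K * ε * (x * (c * x')) ≤ lam := by
  have h1 : K * x ≤ K * (M + 2 * M ^ 2 * c * ε) := mul_le_mul_of_nonneg_left hx1 hK
  have h2 : x * (c * x') ≤ 2 * M * (c * (2 * M)) := by
    have ha : c * x' ≤ c * (2 * M) := mul_le_mul_of_nonneg_left hx3 hc
    have hb : x * (c * x') ≤ x * (c * (2 * M)) := mul_le_mul_of_nonneg_left ha hx0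
    have hd : x * (c * (2 * M)) ≤ 2 * M * (c * (2 * M)) :=
      mul_le_mul_of_nonneg_right hx2 (by positivity)
    linarith
  have h3 : K * ε * (x * (c * x')) ≤ K * ε * (2 * M * (c * (2 * M))) :=
    mul_le_mul_of_nonneg_left h2 (by positivity)
  nlinarith

/-- Contraction of the forward graph transform `φ(l) = D ∘ l ∘ (A + B∘l)⁻¹`
(the zero-section core of Lemma 5.2 of the paper, normally contracted case):
if `‖D‖·‖A⁻¹‖ < λ < 1` then, for some `ε > 0`, for all `l, l'` of norm `≤ ε`,
`A + B∘l` is invertible, `‖φ(l)‖ ≤ λ·ε ≤ ε`, and `‖φ(l) − φ(l')‖ ≤ λ·‖l − l'‖`. -/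
theorem graph_transform_contraction_normally_contracted
    {H V : Type*}
    [NormedAddCommGroup H] [NormedSpace ℝ H] [CompleteSpace H]
    [NormedAddCommGroup V] [NormedSpace ℝ V] [CompleteSpace V]
    (A : H ≃L[ℝ] H) (B : V →L[ℝ] H) (D : V →L[ℝ] V)
    (lam : ℝ) (hlam0 : 0 < lam) (hlam1 : lam < 1)
    (hcontr : ‖D‖ * ‖(A.symm : H →L[ℝ] H)‖ < lam) :
    ∃ ε > (0 : ℝ), ∀ l l' : H →L[ℝ] V, ‖l‖ ≤ ε → ‖l'‖ ≤ ε →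
      ∃ e e' : H ≃L[ℝ] H,
        (e : H →L[ℝ] H) = (A : H →L[ℝ] H) + B ∘L l ∧
        (e' : H →L[ℝ] H) = (A : H →L[ℝ] H) + B ∘L l' ∧
        ‖D ∘L l ∘L (e.symm : H →L[ℝ] H)‖ ≤ lam * ε ∧ lam * ε ≤ ε ∧
        ‖D ∘L l ∘L (e.symm : H →L[ℝ] H) - D ∘L l' ∘L (e'.symm : H →L[ℝ] H)‖
          ≤ lam * ‖l - l'‖ := by
  obtain ⟨ε, hε0, hsmall1, hsmall2⟩ :=
    graph_transform_eps ‖(A.symm : H →L[ℝ] H)‖ ‖B‖ ‖D‖ lam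
      (norm_nonneg _) (norm_nonneg _) (norm_nonneg _) hcontr
  have hM : (0:ℝ) ≤ ‖(A.symm : H →L[ℝ] H)‖ := norm_nonneg _
  have hc : (0:ℝ) ≤ ‖B‖ := norm_nonneg _
  have hK : (0:ℝ) ≤ ‖D‖ := norm_nonneg _
  refine ⟨ε, hε0, fun l l' hl hl' => ?_⟩
  have key : ∀ m : H →L[ℝ] V, ‖m‖ ≤ ε → ‖(A.symm : H →L[ℝ] H)‖ * ‖B ∘L m‖ < 1 := by
    intro m hm
    have h1 : ‖B ∘L m‖ ≤ ‖B‖ * ε := le_trans (opNorm_comp_le _ _)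
      (mul_le_mul_of_nonneg_left hm hc)
    have h2 : ‖(A.symm : H →L[ℝ] H)‖ * ‖B ∘L m‖
        ≤ ‖(A.symm : H →L[ℝ] H)‖ * (‖B‖ * ε) := mul_le_mul_of_nonneg_left h1 hM
    nlinarith
  obtain ⟨e, he⟩ := exists_equiv_add_perturb A (B ∘L l) (key l hl)
  obtain ⟨e', he'⟩ := exists_equiv_add_perturb A (B ∘L l') (key l' hl')
  -- inverse identity
  have inv_id : ∀ (f : H ≃L[ℝ] H) (m : H →L[ℝ] V),
      (f : H →L[ℝ] H) = (A : H →L[ℝ] H) + B ∘L m →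
      (f.symm : H →L[ℝ] H)
        = (A.symm : H →L[ℝ] H)
          - (f.symm : H →L[ℝ] H) ∘L (B ∘L m) ∘L (A.symm : H →L[ℝ] H) := by
    intro f m hf
    have h1 : (f.symm : H →L[ℝ] H) ∘L (A : H →L[ℝ] H)
        + (f.symm : H →L[ℝ] H) ∘L (B ∘L m) = ContinuousLinearMap.id ℝ H := by
      rw [← ContinuousLinearMap.comp_add, ← hf, f.coe_symm_comp_coe]
    have h2 : ((f.symm : H →L[ℝ] H) ∘L (A : H →L[ℝ] H)) ∘L (A.symm : H →L[ℝ] H)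
        = (f.symm : H →L[ℝ] H) := by
      rw [ContinuousLinearMap.comp_assoc, A.coe_comp_coe_symm,
        ContinuousLinearMap.comp_id]
    have h3 : (f.symm : H →L[ℝ] H) ∘L (A : H →L[ℝ] H)
        = ContinuousLinearMap.id ℝ H - (f.symm : H →L[ℝ] H) ∘L (B ∘L m) :=
      eq_sub_of_add_eq h1
    calc (f.symm : H →L[ℝ] H)
        = ((f.symm : H →L[ℝ] H) ∘L (A : H →L[ℝ] H)) ∘L (A.symm : H →L[ℝ] H) := h2.symm
      _ = (ContinuousLinearMap.id ℝ H - (f.symm : H →L[ℝ] H) ∘L (B ∘L m))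
              ∘L (A.symm : H →L[ℝ] H) := by rw [h3]
      _ = (A.symm : H →L[ℝ] H)
            - (f.symm : H →L[ℝ] H) ∘L (B ∘L m) ∘L (A.symm : H →L[ℝ] H) := by
          rw [ContinuousLinearMap.sub_comp, ContinuousLinearMap.id_comp,
            ContinuousLinearMap.comp_assoc]
  -- norm bounds on inverses
  have inv_bound : ∀ (f : H ≃L[ℝ] H) (m : H →L[ℝ] V),
      (f : H →L[ℝ] H) = (A : H →L[ℝ] H) + B ∘L m → ‖m‖ ≤ ε →
      ‖(f.symm : H →L[ℝ] H)‖ ≤ 2 * ‖(A.symm : H →L[ℝ] H)‖ ∧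
        ‖(f.symm : H →L[ℝ] H)‖
          ≤ ‖(A.symm : H →L[ℝ] H)‖ + 2 * ‖(A.symm : H →L[ℝ] H)‖ ^ 2 * ‖B‖ * ε := by
    intro f m hf hm
    have hx0 : (0:ℝ) ≤ ‖(f.symm : H →L[ℝ] H)‖ := norm_nonneg _
    have hBm : ‖B ∘L m‖ ≤ ‖B‖ * ε := le_trans (opNorm_comp_le _ _)
      (mul_le_mul_of_nonneg_left hm hc)
    have hstep : ‖(f.symm : H →L[ℝ] H)‖
        ≤ ‖(A.symm : H →L[ℝ] H)‖
          + ‖(f.symm : H →L[ℝ] H)‖ * (‖B‖ * ε) * ‖(A.symm : H →L[ℝ] H)‖ := by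
      have h0 : ‖(f.symm : H →L[ℝ] H)‖ = ‖(A.symm : H →L[ℝ] H)
          - (f.symm : H →L[ℝ] H) ∘L (B ∘L m) ∘L (A.symm : H →L[ℝ] H)‖ := by
        rw [← inv_id f m hf]
      have h1 : ‖(f.symm : H →L[ℝ] H) ∘L (B ∘L m) ∘L (A.symm : H →L[ℝ] H)‖
          ≤ ‖(f.symm : H →L[ℝ] H)‖ * (‖B ∘L m‖ * ‖(A.symm : H →L[ℝ] H)‖) :=
        le_trans (opNorm_comp_le _ _)
          (mul_le_mul_of_nonneg_left (opNorm_comp_le _ _) hx0)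
      have h2 : ‖(f.symm : H →L[ℝ] H)‖ * (‖B ∘L m‖ * ‖(A.symm : H →L[ℝ] H)‖)
          ≤ ‖(f.symm : H →L[ℝ] H)‖ * (‖B‖ * ε * ‖(A.symm : H →L[ℝ] H)‖) := by
        refine mul_le_mul_of_nonneg_left ?_ hx0
        exact mul_le_mul_of_nonneg_right hBm hM
      have h3 := norm_sub_le ((A.symm : H →L[ℝ] H))
        ((f.symm : H →L[ℝ] H) ∘L (B ∘L m) ∘L (A.symm : H →L[ℝ] H))
      rw [← h0] at h3
      nlinarith
    exact graph_transform_inv_bound _ _ _ _ hM hc hε0.le hx0 hsmall1 hstep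
  obtain ⟨hx2M, hxfine⟩ := inv_bound e l he hl
  obtain ⟨hx'2M, _⟩ := inv_bound e' l' he' hl'
  have hx0 : (0:ℝ) ≤ ‖(e.symm : H →L[ℝ] H)‖ := norm_nonneg _
  have hx'0 : (0:ℝ) ≤ ‖(e'.symm : H →L[ℝ] H)‖ := norm_nonneg _
  -- the common coefficient estimate
  have hcoef := graph_transform_coeff ‖(A.symm : H →L[ℝ] H)‖ ‖B‖ ‖D‖ lam ε
    ‖(e.symm : H →L[ℝ] H)‖ ‖(e'.symm : H →L[ℝ] H)‖
    hM hc hK hε0.le hx0 hx'0 hxfine hx2M hx'2M hsmall2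
  have hKx : ‖D‖ * ‖(e.symm : H →L[ℝ] H)‖ ≤ lam := by
    have h0 : (0:ℝ) ≤ ‖D‖ * ε * (‖(e.symm : H →L[ℝ] H)‖ * (‖B‖ * ‖(e'.symm : H →L[ℝ] H)‖)) := by
      positivity
    linarith
  refine ⟨e, e', he, he', ?_, ?_, ?_⟩
  · -- ‖φ(l)‖ ≤ lam * ε
    have h1 : ‖D ∘L l ∘L (e.symm : H →L[ℝ] H)‖
        ≤ ‖D‖ * (ε * ‖(e.symm : H →L[ℝ] H)‖) := by
      refine le_trans (opNorm_comp_le _ _) (mul_le_mul_of_nonneg_left ?_ hK)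
      exact le_trans (opNorm_comp_le _ _) (mul_le_mul_of_nonneg_right hl hx0)
    have h3 : (‖D‖ * ‖(e.symm : H →L[ℝ] H)‖) * ε ≤ lam * ε :=
      mul_le_mul_of_nonneg_right hKx hε0.le
    nlinarith
  · nlinarith [hε0.le]
  · -- Lipschitz bound
    have hd0 : (0:ℝ) ≤ ‖l - l'‖ := norm_nonneg _
    -- inverse difference identity
    have hdiff : (e.symm : H →L[ℝ] H) - (e'.symm : H →L[ℝ] H)
        = (e.symm : H →L[ℝ] H) ∘L (B ∘L (l' - l)) ∘L (e'.symm : H →L[ℝ] H) := by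
      have hee' : (B ∘L (l' - l)) = (e' : H →L[ℝ] H) - (e : H →L[ℝ] H) := by
        rw [he, he', ContinuousLinearMap.comp_sub]; abel
      have h1 : (e.symm : H →L[ℝ] H) ∘L ((e : H →L[ℝ] H) ∘L (e'.symm : H →L[ℝ] H))
          = (e'.symm : H →L[ℝ] H) := by
        rw [← ContinuousLinearMap.comp_assoc, e.coe_symm_comp_coe,
          ContinuousLinearMap.id_comp]
      have h2 : (e.symm : H →L[ℝ] H) ∘L ((e' : H →L[ℝ] H) ∘L (e'.symm : H →L[ℝ] H))
          = (e.symm : H →L[ℝ] H) := by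
        rw [e'.coe_comp_coe_symm, ContinuousLinearMap.comp_id]
      rw [hee', ContinuousLinearMap.sub_comp, ContinuousLinearMap.comp_sub, h1, h2]
    have hsplit : D ∘L l ∘L (e.symm : H →L[ℝ] H) - D ∘L l' ∘L (e'.symm : H →L[ℝ] H)
        = D ∘L ((l - l') ∘L (e.symm : H →L[ℝ] H))
          + D ∘L (l' ∘L ((e.symm : H →L[ℝ] H) - (e'.symm : H →L[ℝ] H))) := by
      rw [ContinuousLinearMap.sub_comp, ContinuousLinearMap.comp_sub,
        ContinuousLinearMap.comp_sub, ContinuousLinearMap.comp_sub]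
      abel
    rw [hsplit]
    have hb1 : ‖D ∘L ((l - l') ∘L (e.symm : H →L[ℝ] H))‖
        ≤ ‖D‖ * (‖l - l'‖ * ‖(e.symm : H →L[ℝ] H)‖) :=
      le_trans (opNorm_comp_le _ _) (mul_le_mul_of_nonneg_left
        (opNorm_comp_le _ _) hK)
    have hb2 : ‖D ∘L (l' ∘L ((e.symm : H →L[ℝ] H) - (e'.symm : H →L[ℝ] H)))‖
        ≤ ‖D‖ * (ε * (‖(e.symm : H →L[ℝ] H)‖
            * (‖B‖ * ‖l - l'‖ * ‖(e'.symm : H →L[ℝ] H)‖))) := by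
      refine le_trans (opNorm_comp_le _ _) (mul_le_mul_of_nonneg_left ?_ hK)
      refine le_trans (opNorm_comp_le _ _) ?_
      have hdd : ‖(e.symm : H →L[ℝ] H) - (e'.symm : H →L[ℝ] H)‖
          ≤ ‖(e.symm : H →L[ℝ] H)‖ * (‖B‖ * ‖l - l'‖ * ‖(e'.symm : H →L[ℝ] H)‖) := by
        rw [hdiff]
        refine le_trans (opNorm_comp_le _ _) (mul_le_mul_of_nonneg_left ?_ hx0)
        refine le_trans (opNorm_comp_le _ _) ?_
        have hBd : ‖B ∘L (l' - l)‖ ≤ ‖B‖ * ‖l - l'‖ := by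
          refine le_trans (opNorm_comp_le _ _) ?_
          rw [norm_sub_rev]
        exact mul_le_mul_of_nonneg_right hBd hx'0
      exact mul_le_mul hl' hdd (norm_nonneg _) hε0.le
    have htot := le_trans
      (norm_add_le (D ∘L ((l - l') ∘L (e.symm : H →L[ℝ] H)))
        (D ∘L (l' ∘L ((e.symm : H →L[ℝ] H) - (e'.symm : H →L[ℝ] H)))))
      (add_le_add hb1 hb2)
    have hfin : ‖D‖ * (‖l - l'‖ * ‖(e.symm : H →L[ℝ] H)‖)
        + ‖D‖ * (ε * (‖(e.symm : H →L[ℝ] H)‖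
            * (‖B‖ * ‖l - l'‖ * ‖(e'.symm : H →L[ℝ] H)‖)))
        ≤ lam * ‖l - l'‖ := by
      have heq : ‖D‖ * (‖l - l'‖ * ‖(e.symm : H →L[ℝ] H)‖)
          + ‖D‖ * (ε * (‖(e.symm : H →L[ℝ] H)‖
              * (‖B‖ * ‖l - l'‖ * ‖(e'.symm : H →L[ℝ] H)‖)))
          = (‖D‖ * ‖(e.symm : H →L[ℝ] H)‖
              + ‖D‖ * ε * (‖(e.symm : H →L[ℝ] H)‖
                  * (‖B‖ * ‖(e'.symm : H →L[ℝ] H)‖))) * ‖l - l'‖ := by ring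
      rw [heq]
      exact mul_le_mul_of_nonneg_right hcoef hd0
    linarith
end

section
/- Let H and V be real Banach spaces, A : H → H and B : V → H continuous linear maps, D : V → V an invertible continuous linear map, and λ ∈ (0, 1) with ‖D⁻¹‖·‖A‖ < λ. Then there exists ε > 0 such that for all continuous linear maps l, l′ : H → V with ‖l‖ ≤ ε and ‖l′‖ ≤ ε: the continuous linear map D − l∘B : V → V is invertible; the map φ(l) := (D − l∘B)⁻¹ ∘ l ∘ A satisfies ‖φ(l)‖ ≤ λ·ε ≤ ε; and ‖φ(l) − φ(l′)‖ ≤ λ·‖l − l′‖. In particular φ maps the closed ε-ball of the space of continuous linear maps from H to V into itself and is λ-Lipschitz there. -/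
open ContinuousLinearMap

private lemma norm_comp3_le {E1 E2 E3 E4 : Type*}
    [NormedAddCommGroup E1] [NormedSpace ℝ E1] [NormedAddCommGroup E2] [NormedSpace ℝ E2]
    [NormedAddCommGroup E3] [NormedSpace ℝ E3] [NormedAddCommGroup E4] [NormedSpace ℝ E4]
    (f : E3 →L[ℝ] E4) (g : E2 →L[ℝ] E3) (h : E1 →L[ℝ] E2) {x y z : ℝ}
    (hf : ‖f‖ ≤ x) (hg : ‖g‖ ≤ y) (hh : ‖h‖ ≤ z) :
    ‖f ∘L g ∘L h‖ ≤ x * (y * z) := by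
  have h1 : ‖g ∘L h‖ ≤ y * z :=
    le_trans (opNorm_comp_le g h) (mul_le_mul hg hh (norm_nonneg _) (le_trans (norm_nonneg _) hg))
  exact le_trans (opNorm_comp_le f _)
    (mul_le_mul hf h1 (norm_nonneg _) (le_trans (norm_nonneg _) hf))

private lemma arith_basic (lam δ Q c a : ℝ) (hδ : δ = lam - c * a) (hQ : 3 * lam * Q = δ)
    (hδ0 : 0 < δ) (hlam0 : 0 < lam) (hc0 : 0 ≤ c) (ha0 : 0 ≤ a) :
    0 < Q ∧ Q ≤ 1 / 3 ∧ δ ≤ lam := by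
  have hδlam : δ ≤ lam := by nlinarith
  have hQ0 : 0 < Q := by nlinarith
  exact ⟨hQ0, by nlinarith, hδlam⟩

private lemma arith_norm (lam δ Q ε c a M : ℝ) (hδ : δ = lam - c * a) (hQ : 3 * lam * Q = δ)
    (hδ0 : 0 < δ) (hlam0 : 0 < lam) (hc0 : 0 ≤ c) (ha0 : 0 ≤ a) (hε0 : 0 < ε)
    (hM0 : 0 ≤ M) (hM : M * (1 - Q) ≤ c) :
    M * (ε * a) ≤ lam * ε := by
  obtain ⟨hQ0, hQ3, hδlam⟩ := arith_basic lam δ Q c a hδ hQ hδ0 hlam0 hc0 ha0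
  have hs0 : (0:ℝ) < 1 - Q := by linarith
  have hMa : M * a ≤ lam := by nlinarith [mul_le_mul_of_nonneg_right hM ha0]
  nlinarith [mul_le_mul_of_nonneg_right hMa hε0.le]

private lemma arith_lip (lam δ Q ε c a b M M' d : ℝ)
    (hδ : δ = lam - c * a) (hQ : 3 * lam * Q = δ)
    (hδ0 : 0 < δ) (hlam0 : 0 < lam) (hc0 : 0 ≤ c) (ha0 : 0 ≤ a) (hb0 : 0 ≤ b)
    (hε0 : 0 < ε) (hcbε : c * b * ε ≤ Q)
    (hM0 : 0 ≤ M) (hM'0 : 0 ≤ M') (hd0 : 0 ≤ d)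
    (hM : M * (1 - Q) ≤ c) (hM' : M' * (1 - Q) ≤ c) :
    M * (d * a) + M * (d * b) * (M' * (ε * a)) ≤ lam * d := by
  obtain ⟨hQ0, hQ3, hδlam⟩ := arith_basic lam δ Q c a hδ hQ hδ0 hlam0 hc0 ha0
  have hs0 : (0:ℝ) < 1 - Q := by linarith
  set X := M * a with hX
  set Y := M' * (b * ε) with hY
  have hX0 : 0 ≤ X := mul_nonneg hM0 ha0
  have hY0 : 0 ≤ Y := mul_nonneg hM'0 (mul_nonneg hb0 hε0.le)
  have hXs : X * (1 - Q) ≤ lam - δ := by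
    have := mul_le_mul_of_nonneg_right hM ha0
    nlinarith
  have hYs : Y * (1 - Q) ≤ Q := by
    have := mul_le_mul_of_nonneg_right hM' (mul_nonneg hb0 hε0.le)
    nlinarith
  have key : X + X * Y ≤ lam := by
    have H1 : X * (1 - Q) * (1 - Q) ≤ (lam - δ) * (1 - Q) :=
      mul_le_mul_of_nonneg_right hXs hs0.le
    have H2 : X * (1 - Q) * (Y * (1 - Q)) ≤ (lam - δ) * Q :=
      mul_le_mul hXs hYs (by positivity) (by linarith)
    have Hsum : (X + X * Y) * ((1 - Q) * (1 - Q)) ≤ lam - δ := by nlinarith [H1, H2]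
    have Hlam : lam - δ ≤ lam * ((1 - Q) * (1 - Q)) := by
      nlinarith [mul_nonneg hlam0.le (sq_nonneg Q), mul_pos hlam0 hQ0]
    exact le_of_mul_le_mul_right (le_trans Hsum Hlam) (mul_pos hs0 hs0)
  rw [hX, hY] at key
  nlinarith [mul_le_mul_of_nonneg_left key hd0]

set_option maxHeartbeats 1000000 in
/-- Contraction of the backward graph transform `φ(l) = (D − l∘B)⁻¹ ∘ l ∘ A`
(the zero-section core of Lemma 7.2 of the paper, normally expanded case):
if `‖D⁻¹‖·‖A‖ < λ < 1` then, for some `ε > 0`, for all `l, l'` of norm `≤ ε`,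
`D − l∘B` is invertible, `‖φ(l)‖ ≤ λ·ε ≤ ε`, and `‖φ(l) − φ(l')‖ ≤ λ·‖l − l'‖`. -/
theorem graph_transform_contraction_normally_expanded
    {H V : Type*}
    [NormedAddCommGroup H] [NormedSpace ℝ H] [CompleteSpace H]
    [NormedAddCommGroup V] [NormedSpace ℝ V] [CompleteSpace V]
    (A : H →L[ℝ] H) (B : V →L[ℝ] H) (D : V ≃L[ℝ] V)
    (lam : ℝ) (hlam0 : 0 < lam) (hlam1 : lam < 1)
    (hcontr : ‖(D.symm : V →L[ℝ] V)‖ * ‖A‖ < lam) :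
    ∃ ε > (0 : ℝ), ∀ l l' : H →L[ℝ] V, ‖l‖ ≤ ε → ‖l'‖ ≤ ε →
      ∃ e e' : V ≃L[ℝ] V,
        (e : V →L[ℝ] V) = (D : V →L[ℝ] V) - l ∘L B ∧
        (e' : V →L[ℝ] V) = (D : V →L[ℝ] V) - l' ∘L B ∧
        ‖(e.symm : V →L[ℝ] V) ∘L l ∘L A‖ ≤ lam * ε ∧ lam * ε ≤ ε ∧
        ‖(e.symm : V →L[ℝ] V) ∘L l ∘L A - (e'.symm : V →L[ℝ] V) ∘L l' ∘L A‖
          ≤ lam * ‖l - l'‖ := by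
  set c := ‖(D.symm : V →L[ℝ] V)‖ with hc
  set a := ‖A‖ with ha
  set b := ‖B‖ with hb
  have hc0 : 0 ≤ c := norm_nonneg _
  have ha0 : 0 ≤ a := norm_nonneg _
  have hb0 : 0 ≤ b := norm_nonneg _
  set δ := lam - c * a with hδ
  have hδ0 : 0 < δ := by simp only [hδ]; linarith
  set Q := δ / (3 * lam) with hQ
  have hQlam : 3 * lam * Q = δ := by rw [hQ]; field_simp
  obtain ⟨hQ0, hQ3, hδlam⟩ := arith_basic lam δ Q c a hδ hQlam hδ0 hlam0 hc0 ha0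
  set ε := δ / (3 * lam * (c * b + 1)) with hε
  have hε0 : 0 < ε := by positivity
  have hkeyε : (c * b + 1) * ε = Q := by
    rw [hε, hQ]; field_simp
  have hcbε : c * b * ε ≤ Q := by nlinarith
  refine ⟨ε, hε0, fun l l' hl hl' => ?_⟩
  -- construction of the inverse for any small l
  have construct : ∀ m : H →L[ℝ] V, ‖m‖ ≤ ε →
      ∃ e : V ≃L[ℝ] V, (e : V →L[ℝ] V) = (D : V →L[ℝ] V) - m ∘L B ∧
        ‖(e.symm : V →L[ℝ] V)‖ * (1 - Q) ≤ c := by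
    intro m hm
    set t : V →L[ℝ] V := (D.symm : V →L[ℝ] V) ∘L (m ∘L B) with htdef
    have htQ : ‖t‖ ≤ Q := by
      calc ‖t‖ ≤ c * (‖m‖ * b) := opNorm_comp_le _ _ |>.trans (by
              have := opNorm_comp_le m B
              exact mul_le_mul_of_nonneg_left this hc0)
        _ ≤ c * (ε * b) := by
            nlinarith [mul_nonneg (mul_nonneg hc0 hb0) (sub_nonneg.2 hm)]
        _ ≤ Q := by nlinarith
    have ht1 : ‖t‖ < 1 := lt_of_le_of_lt htQ (by linarith)
    set u : (V →L[ℝ] V)ˣ := Units.oneSub t ht1 with hu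
    set e : V ≃L[ℝ] V := (ContinuousLinearEquiv.unitsEquiv ℝ V u).trans D with he
    have hval : ((ContinuousLinearEquiv.unitsEquiv ℝ V u : V ≃L[ℝ] V) : V →L[ℝ] V)
        = 1 - t := rfl
    have he1 : (e : V →L[ℝ] V) = (D : V →L[ℝ] V) ∘L (1 - t) := by
      rw [he, ← ContinuousLinearEquiv.comp_coe, hval]
    refine ⟨e, ?_, ?_⟩
    · rw [he1]
      ext v
      simp only [comp_apply, sub_apply, one_apply, htdef, map_sub,
        ContinuousLinearEquiv.coe_coe]
      rw [D.apply_symm_apply]; rfl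
    · have hsymm : (e.symm : V →L[ℝ] V) = (↑u⁻¹ : V →L[ℝ] V) ∘L (D.symm : V →L[ℝ] V) := rfl
      have hinv1 : (↑u⁻¹ : V →L[ℝ] V) = 1 + (↑u⁻¹ : V →L[ℝ] V) * t := by
        have h1 : (↑u⁻¹ : V →L[ℝ] V) * (1 - t) = 1 := by
          have := u.inv_mul
          rwa [hu, Units.val_oneSub] at this
        rw [mul_sub, mul_one] at h1
        rw [← h1]; abel
      have hinvnorm : ‖(↑u⁻¹ : V →L[ℝ] V)‖ * (1 - Q) ≤ 1 := by
        have h2 : ‖(↑u⁻¹ : V →L[ℝ] V)‖ ≤ 1 + ‖(↑u⁻¹ : V →L[ℝ] V)‖ * ‖t‖ := by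
          calc ‖(↑u⁻¹ : V →L[ℝ] V)‖ = ‖1 + (↑u⁻¹ : V →L[ℝ] V) * t‖ := by rw [← hinv1]
            _ ≤ ‖(1 : V →L[ℝ] V)‖ + ‖(↑u⁻¹ : V →L[ℝ] V) * t‖ := norm_add_le _ _
            _ ≤ 1 + ‖(↑u⁻¹ : V →L[ℝ] V)‖ * ‖t‖ := by
                have := norm_mul_le (↑u⁻¹ : V →L[ℝ] V) t
                have h1le : ‖(1 : V →L[ℝ] V)‖ ≤ 1 := by
                  rw [ContinuousLinearMap.one_def]; exact norm_id_le
                linarith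
        nlinarith [mul_nonneg (norm_nonneg (↑u⁻¹ : V →L[ℝ] V)) (sub_nonneg.2 htQ)]
      have hQ1 : (0:ℝ) ≤ 1 - Q := by linarith
      have h4 : ‖(e.symm : V →L[ℝ] V)‖ ≤ ‖(↑u⁻¹ : V →L[ℝ] V)‖ * c := by
        rw [hsymm]; exact opNorm_comp_le _ _
      calc ‖(e.symm : V →L[ℝ] V)‖ * (1 - Q)
          ≤ ‖(↑u⁻¹ : V →L[ℝ] V)‖ * c * (1 - Q) :=
            mul_le_mul_of_nonneg_right h4 hQ1
        _ = c * (‖(↑u⁻¹ : V →L[ℝ] V)‖ * (1 - Q)) := by ring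
        _ ≤ c * 1 := mul_le_mul_of_nonneg_left hinvnorm hc0
        _ = c := mul_one c
  obtain ⟨e, he, hM⟩ := construct l hl
  obtain ⟨e', he', hM'⟩ := construct l' hl'
  set F : V →L[ℝ] V := (e.symm : V →L[ℝ] V) with hF
  set F' : V →L[ℝ] V := (e'.symm : V →L[ℝ] V) with hF'
  have hM0 : 0 ≤ ‖F‖ := norm_nonneg _
  have hM'0 : 0 ≤ ‖F'‖ := norm_nonneg _
  refine ⟨e, e', he, he', ?_, ?_, ?_⟩
  · calc ‖F ∘L l ∘L A‖ ≤ ‖F‖ * (ε * a) := norm_comp3_le F l A le_rfl hl le_rfl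
      _ ≤ lam * ε := arith_norm lam δ Q ε c a ‖F‖ hδ hQlam hδ0 hlam0 hc0 ha0 hε0 hM0 hM
  · nlinarith
  · -- Lipschitz estimate
    have hkey : ∀ x : V, F x - F' x = F ((l - l') (B (F' x))) := by
      intro x
      have h2 : (e' : V →L[ℝ] V) (F' x) = x := by
        simp only [hF', ContinuousLinearEquiv.coe_coe]
        exact e'.apply_symm_apply x
      have h1 : (e : V →L[ℝ] V) (F' x) = x - (l - l') (B (F' x)) := by
        rw [he]
        rw [he'] at h2
        simp only [sub_apply, comp_apply] at h2 ⊢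
        generalize F' x = y at h2 ⊢
        rw [← h2]
        abel
      have h3 : F ((e : V →L[ℝ] V) (F' x)) = F' x := by
        simp only [hF, ContinuousLinearEquiv.coe_coe]
        exact e.symm_apply_apply _
      have h4 : x - (e : V →L[ℝ] V) (F' x) = (l - l') (B (F' x)) := by
        rw [h1]; abel
      calc F x - F' x = F x - F ((e : V →L[ℝ] V) (F' x)) := by rw [h3]
        _ = F (x - (e : V →L[ℝ] V) (F' x)) := (map_sub F _ _).symm
        _ = F ((l - l') (B (F' x))) := by rw [h4]
    have hsplit : F ∘L l ∘L A - F' ∘L l' ∘L A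
        = F ∘L (l - l') ∘L A + (F ∘L (l - l') ∘L B) ∘L (F' ∘L l' ∘L A) := by
      ext x
      have hk := hkey (l' (A x))
      simp only [ContinuousLinearMap.add_apply, comp_apply, sub_apply, map_sub] at hk ⊢
      rw [← hk]
      abel
    have hd0 : 0 ≤ ‖l - l'‖ := norm_nonneg _
    have hnorm1 : ‖F ∘L (l - l') ∘L A‖ ≤ ‖F‖ * (‖l - l'‖ * a) :=
      norm_comp3_le F (l - l') A le_rfl le_rfl le_rfl
    have hnorm2 : ‖(F ∘L (l - l') ∘L B) ∘L (F' ∘L l' ∘L A)‖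
        ≤ ‖F‖ * (‖l - l'‖ * b) * (‖F'‖ * (ε * a)) := by
      have hA1 : ‖F ∘L (l - l') ∘L B‖ ≤ ‖F‖ * (‖l - l'‖ * b) :=
        norm_comp3_le F (l - l') B le_rfl le_rfl le_rfl
      have hA2 : ‖F' ∘L l' ∘L A‖ ≤ ‖F'‖ * (ε * a) :=
        norm_comp3_le F' l' A le_rfl hl' le_rfl
      exact le_trans (opNorm_comp_le _ _)
        (mul_le_mul hA1 hA2 (norm_nonneg _) (le_trans (norm_nonneg _) hA1))
    calc ‖F ∘L l ∘L A - F' ∘L l' ∘L A‖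
        = ‖F ∘L (l - l') ∘L A + (F ∘L (l - l') ∘L B) ∘L (F' ∘L l' ∘L A)‖ := by rw [hsplit]
      _ ≤ ‖F ∘L (l - l') ∘L A‖ + ‖(F ∘L (l - l') ∘L B) ∘L (F' ∘L l' ∘L A)‖ := norm_add_le _ _
      _ ≤ ‖F‖ * (‖l - l'‖ * a) + ‖F‖ * (‖l - l'‖ * b) * (‖F'‖ * (ε * a)) :=
          add_le_add hnorm1 hnorm2
      _ ≤ lam * ‖l - l'‖ :=
          arith_lip lam δ Q ε c a b ‖F‖ ‖F'‖ ‖l - l'‖ hδ hQlam hδ0 hlam0 hc0 ha0 hb0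
            hε0 hcbε hM0 hM'0 hd0 hM hM'
end

section
/- Let H and V be real Banach spaces, m ≥ 1 an integer, A : H → H and B : V → H continuous linear maps, D : V → V an invertible continuous linear map, and λ ∈ (0, 1) with ‖D⁻¹‖·‖A‖^m < λ. Then there exists ε > 0 such that for every continuous linear map l₁ : H → V with ‖l₁‖ ≤ ε, the map D − l₁∘B is invertible, and the linear operator Φ on the Banach space of continuous m-multilinear maps from H^m to V defined by Φ(L)(u₁, …, u_m) := (D − l₁∘B)⁻¹ (L(A·u₁, …, A·u_m)) has operator norm at most λ; in particular Φ is a λ-contracting linear operator. -/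
/-- Contraction on the `m`-th order part of jets (core of Lemma 7.4 of the paper,
`Cʳ` persistence of normally expanded laminations): if `‖D⁻¹‖·‖A‖^m < λ < 1`
then there is `ε > 0` such that for every `l₁` with `‖l₁‖ ≤ ε`, the map
`D − l₁∘B` is invertible and the linear operator
`Φ(L)(u₁, …, u_m) = (D − l₁∘B)⁻¹ (L(A·u₁, …, A·u_m))` on continuous
`m`-multilinear maps `Hᵐ → V` has operator norm at most `λ`. -/
theorem jet_graph_transform_contraction
    {H V : Type*}
    [NormedAddCommGroup H] [NormedSpace ℝ H] [CompleteSpace H]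
    [NormedAddCommGroup V] [NormedSpace ℝ V] [CompleteSpace V]
    (m : ℕ) (hm : 1 ≤ m)
    (A : H →L[ℝ] H) (B : V →L[ℝ] H) (D : V ≃L[ℝ] V)
    (lam : ℝ) (hlam0 : 0 < lam) (hlam1 : lam < 1)
    (hcontr : ‖(D.symm : V →L[ℝ] V)‖ * ‖A‖ ^ m < lam) :
    ∃ ε > (0 : ℝ), ∀ l₁ : H →L[ℝ] V, ‖l₁‖ ≤ ε →
      ∃ e : V ≃L[ℝ] V,
        (e : V →L[ℝ] V) = (D : V →L[ℝ] V) - l₁ ∘L B ∧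
        (∀ L : ContinuousMultilinearMap ℝ (fun _ : Fin m => H) V,
          ‖(e.symm : V →L[ℝ] V).compContinuousMultilinearMap
              (L.compContinuousLinearMap (fun _ => A))‖ ≤ lam * ‖L‖) ∧
        (∀ L L' : ContinuousMultilinearMap ℝ (fun _ : Fin m => H) V,
          ‖(e.symm : V →L[ℝ] V).compContinuousMultilinearMap
              (L.compContinuousLinearMap (fun _ => A)) -
            (e.symm : V →L[ℝ] V).compContinuousMultilinearMap
              (L'.compContinuousLinearMap (fun _ => A))‖ ≤ lam * ‖L - L'‖) := by

  classical
  set c : ℝ := ‖(D.symm : V →L[ℝ] V)‖ with hc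
  have hc0 : 0 ≤ c := norm_nonneg _
  have hAm : (0:ℝ) ≤ ‖A‖ ^ m := pow_nonneg (norm_nonneg _) m
  -- choose δ ∈ (0, 1) with c * ‖A‖^m / (1 - δ) ≤ lam
  set δ : ℝ := min (1/2) (1 - c * ‖A‖ ^ m / lam) with hδ
  have hδpos : 0 < δ := by
    apply lt_min (by norm_num)
    have : c * ‖A‖ ^ m / lam < 1 := (div_lt_one hlam0).2 hcontr
    linarith
  have hδlt1 : δ < 1 := lt_of_le_of_lt (min_le_left _ _) (by norm_num)
  have hkey : c * ‖A‖ ^ m ≤ lam * (1 - δ) := by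
    have h1 : δ ≤ 1 - c * ‖A‖ ^ m / lam := min_le_right _ _
    have h2 : c * ‖A‖ ^ m / lam ≤ 1 - δ := by linarith
    calc c * ‖A‖ ^ m = (c * ‖A‖ ^ m / lam) * lam := by field_simp
      _ ≤ (1 - δ) * lam := by
          apply mul_le_mul_of_nonneg_right h2 hlam0.le
      _ = lam * (1 - δ) := mul_comm _ _
  refine ⟨δ / (c * ‖B‖ + 1), div_pos hδpos (by positivity), fun l₁ hl₁ => ?_⟩
  set t : V →L[ℝ] V := (D.symm : V →L[ℝ] V) ∘L (l₁ ∘L B) with ht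
  have htnorm : ‖t‖ ≤ δ := by
    have h1 : ‖t‖ ≤ c * (‖l₁‖ * ‖B‖) :=
      le_trans (ContinuousLinearMap.opNorm_comp_le _ _)
        (mul_le_mul_of_nonneg_left (ContinuousLinearMap.opNorm_comp_le _ _) hc0)
    have h2 : c * (‖l₁‖ * ‖B‖) ≤ c * ‖B‖ * (δ / (c * ‖B‖ + 1)) := by
      have := mul_le_mul_of_nonneg_left hl₁ (mul_nonneg hc0 (norm_nonneg B))
      calc c * (‖l₁‖ * ‖B‖) = c * ‖B‖ * ‖l₁‖ := by ring
        _ ≤ c * ‖B‖ * (δ / (c * ‖B‖ + 1)) := this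
    have h3 : c * ‖B‖ * (δ / (c * ‖B‖ + 1)) ≤ δ := by
      rw [mul_div_assoc'] at *
      rw [div_le_iff₀ (by positivity)]
      have : c * ‖B‖ ≤ c * ‖B‖ + 1 := by linarith
      calc c * ‖B‖ * δ = δ * (c * ‖B‖) := by ring
        _ ≤ δ * (c * ‖B‖ + 1) := by
            exact mul_le_mul_of_nonneg_left this hδpos.le
    linarith
  have htlt1 : ‖t‖ < 1 := lt_of_le_of_lt htnorm hδlt1
  -- the unit 1 - t
  set u : (V →L[ℝ] V)ˣ := Units.oneSub t htlt1 with hu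
  have huinv : ‖((u⁻¹ : (V →L[ℝ] V)ˣ) : V →L[ℝ] V)‖ ≤ (1 - ‖t‖)⁻¹ := by
    have := tsum_geometric_le_of_norm_lt_one t htlt1
    have h1 : ‖(1 : V →L[ℝ] V)‖ ≤ 1 := ContinuousLinearMap.norm_id_le
    have : ‖∑' n : ℕ, t ^ n‖ ≤ (1 - ‖t‖)⁻¹ := by linarith
    exact this
  set e : V ≃L[ℝ] V :=
    (ContinuousLinearEquiv.unitsEquiv ℝ V u).trans (D : V ≃L[ℝ] V) with he
  have hecoe : (e : V →L[ℝ] V) = (D : V →L[ℝ] V) - l₁ ∘L B := by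
    ext v
    simp only [ContinuousLinearMap.sub_apply, ContinuousLinearMap.comp_apply]
    show D (((u : V →L[ℝ] V)) v) = D v - l₁ (B v)
    simp [hu, ht]
  have hesymm : (e.symm : V →L[ℝ] V)
      = ((u⁻¹ : (V →L[ℝ] V)ˣ) : V →L[ℝ] V) ∘L (D.symm : V →L[ℝ] V) := by
    ext v
    rfl
  have hesymmnorm : ‖(e.symm : V →L[ℝ] V)‖ ≤ (1 - ‖t‖)⁻¹ * c := by
    rw [hesymm]
    exact le_trans (ContinuousLinearMap.opNorm_comp_le _ _)
      (mul_le_mul_of_nonneg_right huinv hc0)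
  have hbound : ∀ L : ContinuousMultilinearMap ℝ (fun _ : Fin m => H) V,
      ‖(e.symm : V →L[ℝ] V).compContinuousMultilinearMap
        (L.compContinuousLinearMap (fun _ => A))‖ ≤ lam * ‖L‖ := by
    intro L
    have h1 := (e.symm : V →L[ℝ] V).norm_compContinuousMultilinearMap_le
      (L.compContinuousLinearMap (fun _ => A))
    have h2 := L.norm_compContinuousLinearMap_le (fun _ : Fin m => A)
    have h2' : ‖L.compContinuousLinearMap (fun _ : Fin m => A)‖ ≤ ‖L‖ * ‖A‖ ^ m := by
      simpa [Finset.prod_const] using h2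
    have h3 : ‖(e.symm : V →L[ℝ] V).compContinuousMultilinearMap
        (L.compContinuousLinearMap (fun _ => A))‖ ≤ (1 - ‖t‖)⁻¹ * c * (‖L‖ * ‖A‖ ^ m) :=
      le_trans h1 (mul_le_mul hesymmnorm h2' (norm_nonneg _)
        (mul_nonneg (inv_nonneg.2 (by linarith)) hc0))
    have h4 : (1 - ‖t‖)⁻¹ * c * (‖L‖ * ‖A‖ ^ m) ≤ lam * ‖L‖ := by
      have hδt : 1 - δ ≤ 1 - ‖t‖ := by linarith
      have hpos : 0 < 1 - δ := by linarith
      have hinv : (1 - ‖t‖)⁻¹ ≤ (1 - δ)⁻¹ :=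
        inv_anti₀ hpos hδt
      have : (1 - ‖t‖)⁻¹ * c * (‖L‖ * ‖A‖ ^ m)
          ≤ (1 - δ)⁻¹ * (c * ‖A‖ ^ m) * ‖L‖ := by
        calc (1 - ‖t‖)⁻¹ * c * (‖L‖ * ‖A‖ ^ m)
            = (1 - ‖t‖)⁻¹ * (c * ‖A‖ ^ m) * ‖L‖ := by ring
          _ ≤ (1 - δ)⁻¹ * (c * ‖A‖ ^ m) * ‖L‖ := by
              apply mul_le_mul_of_nonneg_right
                (mul_le_mul_of_nonneg_right hinv (by positivity)) (norm_nonneg _)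
      refine this.trans ?_
      apply mul_le_mul_of_nonneg_right _ (norm_nonneg L)
      rw [inv_mul_le_iff₀ hpos]
      linarith [hkey]
    exact h3.trans h4
  refine ⟨e, hecoe, hbound, fun L L' => ?_⟩
  have hdiff : (e.symm : V →L[ℝ] V).compContinuousMultilinearMap
        (L.compContinuousLinearMap (fun _ => A)) -
      (e.symm : V →L[ℝ] V).compContinuousMultilinearMap
        (L'.compContinuousLinearMap (fun _ => A))
      = (e.symm : V →L[ℝ] V).compContinuousMultilinearMap
        ((L - L').compContinuousLinearMap (fun _ => A)) := by
    ext v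
    simp
  rw [hdiff]
  exact hbound (L - L')
end

section
/- Let L be a locally compact Hausdorff second-countable topological space and f : L → L a proper continuous map. Let L̃ := {(xₙ)ₙ∈ℕ ∈ L^ℕ : f(x_{n+1}) = xₙ for all n ∈ ℕ}, endowed with the subspace topology from the product topology on L^ℕ. Then L̃ is a closed subset of L^ℕ, and L̃ is locally compact and second countable. -/
/-- For a proper continuous map `f` of a locally compact Hausdorff second-countable
space `L`, the space of preorbits `L̃ = {(xₙ)ₙ ∈ L^ℕ : f(x_{n+1}) = xₙ}` is a
closed subset of `L^ℕ` which is locally compact and second countable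
(point-set topological core of Proposition 4.1 of the paper). -/
theorem preorbit_space_locally_compact_second_countable
    {L : Type*} [TopologicalSpace L] [LocallyCompactSpace L] [T2Space L]
    [SecondCountableTopology L]
    (f : L → L) (hf : Continuous f)
    (hproper : ∀ K : Set L, IsCompact K → IsCompact (f ⁻¹' K)) :
    IsClosed {x : ℕ → L | ∀ n, f (x (n + 1)) = x n} ∧
    LocallyCompactSpace {x : ℕ → L // ∀ n, f (x (n + 1)) = x n} ∧
    SecondCountableTopology {x : ℕ → L // ∀ n, f (x (n + 1)) = x n} := by
  have hclosed : IsClosed {x : ℕ → L | ∀ n, f (x (n + 1)) = x n} := by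
    have : {x : ℕ → L | ∀ n, f (x (n + 1)) = x n}
        = ⋂ n, {x : ℕ → L | f (x (n + 1)) = x n} := by
      ext x; simp
    rw [this]
    exact isClosed_iInter fun n =>
      isClosed_eq (hf.comp (continuous_apply (n + 1))) (continuous_apply n)
  -- compactness of preimages of iterates
  have hiter : ∀ (K : Set L), IsCompact K → ∀ n, IsCompact (f^[n] ⁻¹' K) := by
    intro K hK n
    induction n with
    | zero => simpa using hK
    | succ n ih =>
      have : f^[n + 1] ⁻¹' K = f ⁻¹' (f^[n] ⁻¹' K) := by
        ext x; simp [Function.iterate_succ_apply]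
      rw [this]; exact hproper _ ih
  refine ⟨hclosed, ?_, ?_⟩
  · -- locally compact
    have : WeaklyLocallyCompactSpace {x : ℕ → L // ∀ n, f (x (n + 1)) = x n} := by
      constructor
      intro x
      obtain ⟨K, hKc, hKn⟩ := exists_compact_mem_nhds (x.1 0)
      refine ⟨Subtype.val ⁻¹' ((fun y : ℕ → L => y 0) ⁻¹' K), ?_, ?_⟩
      · -- compact
        rw [Topology.IsEmbedding.isCompact_iff Topology.IsEmbedding.subtypeVal]
        have himg : (Subtype.val : {x : ℕ → L // ∀ n, f (x (n + 1)) = x n} → ℕ → L) ''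
              (Subtype.val ⁻¹' ((fun y : ℕ → L => y 0) ⁻¹' K))
            = {y : ℕ → L | ∀ n, f (y (n + 1)) = y n} ∩ ((fun y : ℕ → L => y 0) ⁻¹' K) := by
          ext y
          simp only [Set.mem_image, Set.mem_preimage, Set.mem_inter_iff, Set.mem_setOf_eq,
            Subtype.exists, exists_and_right, exists_eq_right]
          tauto
        rw [himg]
        have hsub : {y : ℕ → L | ∀ n, f (y (n + 1)) = y n} ∩ ((fun y : ℕ → L => y 0) ⁻¹' K)
            ⊆ Set.univ.pi fun n => f^[n] ⁻¹' K := by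
          rintro y ⟨hy, hy0⟩ n _
          have key : ∀ m, f^[m] (y m) = y 0 := by
            intro m
            induction m with
            | zero => rfl
            | succ m ih =>
              rw [Function.iterate_succ_apply, hy m, ih]
          simpa [key n] using hy0
        refine IsCompact.of_isClosed_subset (isCompact_univ_pi fun n => hiter K hKc n)
          (hclosed.inter ((hKc.isClosed).preimage (continuous_apply 0))) hsub
      · -- neighborhood
        exact (continuous_subtype_val.comp continuous_id).continuousAt.preimage_mem_nhds
          ((continuous_apply 0).continuousAt.preimage_mem_nhds hKn)
    infer_instance
  · exact Topology.IsInducing.secondCountableTopology Topology.IsInducing.subtypeVal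
end
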